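/- Let G_n(x_1,...,x_n | R) = ∑_{p=0}^{n} (-1)^p 2^{n-p} B_{n-p,n}, where B_{q,n} = ∑_{1≤k_1<...<k_q≤n} Φ_q(x_{k_1},...,x_{k_q} | R_{k_1...k_q}) for q ≥ 1 (Φ_q the Gaussian CDF with the corresponding submatrix of the correlation matrix R) and B_{0,n} = 1. Then lim_{x_n→+∞} G_n(x_1,...,x_n|R) = G_{n-1}(x_1,...,x_{n-1}|R') and lim_{x_n→-∞} G_n(x_1,...,x_n|R) = -G_{n-1}(x_1,...,x_{n-1}|R'), where R' is R with the last row and column removed. -/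

import Mathlib

open MeasureTheory Matrix Finset Filter

/-- CDF of a centered `q`-variate Gaussian with unit variances and correlation matrix `R`. -/
noncomputable def gaussCDF {q : ℕ} (R : Matrix (Fin q) (Fin q) ℝ) (x : Fin q → ℝ) : ℝ :=
  ∫ u in Set.pi Set.univ (fun i => Set.Iic (x i)),
    (2 * Real.pi) ^ (-(q : ℝ) / 2) * R.det ^ (-(1 : ℝ) / 2) *
      Real.exp (-(dotProduct u (R⁻¹.mulVec u)) / 2)

/-- The block function `B_{p,n}`: sum of marginal Gaussian CDFs over all ordered
`p`-tuples of indices; `B_{0,n} = 1`. -/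
noncomputable def blockFun (n p : ℕ) (R : Matrix (Fin n) (Fin n) ℝ) (x : Fin n → ℝ) : ℝ :=
  if p = 0 then 1
  else ∑ s ∈ Finset.powersetCard p (Finset.univ : Finset (Fin n)),
    if h : s.card = p then
      gaussCDF (R.submatrix (s.orderEmbOfFin h) (s.orderEmbOfFin h))
        (fun i => x (s.orderEmbOfFin h i))
    else 0

/-- The `n`-body cluster function. -/
noncomputable def clusterFun (n : ℕ) (R : Matrix (Fin n) (Fin n) ℝ) (x : Fin n → ℝ) : ℝ :=
  ∑ p ∈ Finset.range (n + 1), (-1 : ℝ) ^ p * 2 ^ (n - p) * blockFun n (n - p) R x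

/-!
Integrating the Gaussian density with correlation matrix `S` over its last coordinate gives the
density with correlation matrix `S'`, the matrix `S` without its last row and column: completing
the square in the last variable leaves the Schur complement of the last diagonal entry `a` of
`S⁻¹`, which is `S'⁻¹`, and the cofactor formula gives `det S' = a det S`. By dominated
convergence, `Φ_q` therefore tends to `Φ_{q-1}` as its last argument tends to `+∞` and to `0` as
it tends to `-∞`. Sorting the index sets in `B_{q,n}` by whether they contain `n`, the first kind
contributes `B_{q,n-1}` and the second tends to `B_{q-1,n-1}` at `+∞` and to `0` at `-∞`. Since
`B_{n,n-1} = 0`, the alternating sum of the `B_{q,n-1}` is `-G_{n-1}` and that of the shifted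
`B_{q-1,n-1}` is `2 G_{n-1}`.
-/

open scoped Topology

theorem integral_exp_neg_quadratic {a : ℝ} (ha : 0 < a) (b g : ℝ) :
    ∫ t : ℝ, Real.exp (-(a * t ^ 2 + 2 * b * t + g) / 2)
      = √(2 * Real.pi / a) * Real.exp (-(g - b ^ 2 / a) / 2) := by
  have complete_square (t : ℝ) : Real.exp (-(a * t ^ 2 + 2 * b * t + g) / 2)
      = Real.exp (-(a / 2) * (t + b / a) ^ 2) * Real.exp (-(g - b ^ 2 / a) / 2) := by
    rw [← Real.exp_add]; congr 1; field_simp; ring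
  simp_rw [complete_square, integral_mul_const]
  rw [integral_add_right_eq_self (fun s => Real.exp (-(a / 2) * s ^ 2)) (b / a),
    integral_gaussian, div_div_eq_mul_div, mul_comm Real.pi]

namespace Matrix

variable {ι : Type*} [Fintype ι]

theorem PosDef.exists_pos_mul_sum_sq_le [Nonempty ι] {A : Matrix ι ι ℝ} (hA : A.PosDef) :
    ∃ ε > 0, ∀ u : ι → ℝ, ε * ∑ i, u i ^ 2 ≤ u ⬝ᵥ A *ᵥ u := by
  obtain ⟨v, hv, hmin⟩ := (isCompact_sphere (0 : ι → ℝ) 1).exists_isMinOn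
    (NormedSpace.sphere_nonempty.2 zero_le_one)
    (show Continuous fun u : ι → ℝ => u ⬝ᵥ A *ᵥ u by fun_prop).continuousOn
  have hpos : 0 < v ⬝ᵥ A *ᵥ v := by
    simpa using hA.dotProduct_mulVec_pos (ne_zero_of_mem_unit_sphere ⟨v, hv⟩)
  refine ⟨v ⬝ᵥ A *ᵥ v / Fintype.card ι, by positivity, fun u => ?_⟩
  rcases eq_or_ne u 0 with rfl | hu
  · simp
  have hnorm : 0 < ‖u‖ := norm_pos_iff.2 hu
  have hsum : ∑ i, u i ^ 2 ≤ Fintype.card ι * ‖u‖ ^ 2 := by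
    simpa using Finset.sum_le_sum fun i (_ : i ∈ univ) =>
      (sq_le_sq₀ (abs_nonneg _) hnorm.le).2 (by simpa using norm_le_pi_norm u i)
  have hscaled : v ⬝ᵥ A *ᵥ v ≤ ‖u‖⁻¹ ^ 2 * (u ⬝ᵥ A *ᵥ u) := by
    have := hmin (by simp [norm_smul, hnorm.ne'] : ‖u‖⁻¹ • u ∈ Metric.sphere (0 : ι → ℝ) 1)
    simpa [smul_dotProduct, mulVec_smul, dotProduct_smul, smul_eq_mul, sq, mul_assoc] using this
  calc v ⬝ᵥ A *ᵥ v / Fintype.card ι * ∑ i, u i ^ 2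
      ≤ v ⬝ᵥ A *ᵥ v / Fintype.card ι * (Fintype.card ι * ‖u‖ ^ 2) := by gcongr
    _ = v ⬝ᵥ A *ᵥ v * ‖u‖ ^ 2 := by field_simp
    _ ≤ u ⬝ᵥ A *ᵥ u := by
      rw [inv_pow] at hscaled
      rwa [le_inv_mul_iff₀ (by positivity), mul_comm] at hscaled

theorem PosDef.integrable_exp_neg_dotProduct_mulVec [Nonempty ι] {A : Matrix ι ι ℝ}
    (hA : A.PosDef) : Integrable fun u : ι → ℝ => Real.exp (-(u ⬝ᵥ A *ᵥ u) / 2) := by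
  obtain ⟨ε, hε, hbound⟩ := hA.exists_pos_mul_sum_sq_le
  have hdom : Integrable fun u : ι → ℝ => ∏ i, Real.exp (-(ε / 2) * u i ^ 2) :=
    Integrable.fintype_prod (f := fun _ t => Real.exp (-(ε / 2) * t ^ 2))
      fun _ => integrable_exp_neg_mul_sq (by positivity)
  refine hdom.mono (by fun_prop) (Eventually.of_forall fun u => ?_)
  rw [Real.norm_of_nonneg (Real.exp_pos _).le, Real.norm_of_nonneg (by positivity),
    ← Real.exp_sum, Real.exp_le_exp, ← Finset.mul_sum]
  linarith [hbound u]


variable {m : ℕ}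

noncomputable def lastSchurComplement (A : Matrix (Fin (m + 1)) (Fin (m + 1)) ℝ) :
    Matrix (Fin m) (Fin m) ℝ :=
  A.submatrix Fin.castSucc Fin.castSucc - (A (Fin.last m) (Fin.last m))⁻¹ •
    vecMulVec (fun i => A i.castSucc (Fin.last m)) (fun j => A (Fin.last m) j.castSucc)

theorem IsSymm.dotProduct_mulVec_snoc {A : Matrix (Fin (m + 1)) (Fin (m + 1)) ℝ}
    (hA : A.IsSymm) (v : Fin m → ℝ) (t : ℝ) :
    Fin.snoc v t ⬝ᵥ A *ᵥ Fin.snoc v t = A (Fin.last m) (Fin.last m) * t ^ 2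
      + 2 * ((fun i => A (Fin.last m) i.castSucc) ⬝ᵥ v) * t
      + v ⬝ᵥ A.submatrix Fin.castSucc Fin.castSucc *ᵥ v := by
  have hcol : ∑ i, v i * (A i.castSucc (Fin.last m) * t)
      = ((fun i => A (Fin.last m) i.castSucc) ⬝ᵥ v) * t := by
    rw [dotProduct, Finset.sum_mul]
    exact Finset.sum_congr rfl fun i _ => by rw [hA.apply]; ring
  simp only [dotProduct, mulVec, Fin.sum_univ_castSucc, Fin.snoc_castSucc, Fin.snoc_last,
    submatrix_apply, mul_add, Finset.sum_add_distrib] at hcol ⊢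
  rw [hcol]
  ring

theorem IsSymm.dotProduct_lastSchurComplement_mulVec
    {A : Matrix (Fin (m + 1)) (Fin (m + 1)) ℝ} (hA : A.IsSymm) (v : Fin m → ℝ) :
    v ⬝ᵥ A.lastSchurComplement *ᵥ v = v ⬝ᵥ A.submatrix Fin.castSucc Fin.castSucc *ᵥ v
      - ((fun i => A (Fin.last m) i.castSucc) ⬝ᵥ v) ^ 2 / A (Fin.last m) (Fin.last m) := by
  have hcol : (fun i : Fin m => A i.castSucc (Fin.last m)) = fun i => A (Fin.last m) i.castSucc :=
    funext fun i => hA.apply _ _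
  simp only [lastSchurComplement, sub_mulVec, dotProduct_sub, smul_mulVec, dotProduct_smul,
    vecMulVec_mulVec, op_smul_eq_smul, smul_eq_mul, hcol]
  rw [dotProduct_comm v (fun i => A (Fin.last m) i.castSucc)]
  ring

theorem lastSchurComplement_mul_submatrix_castSucc {A S : Matrix (Fin (m + 1)) (Fin (m + 1)) ℝ}
    (hAS : A * S = 1) (hα : A (Fin.last m) (Fin.last m) ≠ 0) :
    A.lastSchurComplement * S.submatrix Fin.castSucc Fin.castSucc = 1 := by
  ext i j
  have h₁ := congr_fun₂ hAS i.castSucc j.castSucc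
  have h₂ := congr_fun₂ hAS (Fin.last m) j.castSucc
  simp only [mul_apply, Fin.sum_univ_castSucc, one_apply, Fin.castSucc_inj,
    (Fin.castSucc_lt_last j).ne', if_false] at h₁ h₂
  simp only [lastSchurComplement, mul_apply, sub_apply, smul_apply, vecMulVec_apply,
    submatrix_apply, one_apply, smul_eq_mul, sub_mul, Finset.sum_sub_distrib, mul_assoc,
    ← Finset.mul_sum]
  field_simp
  linear_combination A (Fin.last m) (Fin.last m) * h₁ - A i.castSucc (Fin.last m) * h₂

theorem det_submatrix_castSucc {S : Matrix (Fin (m + 1)) (Fin (m + 1)) ℝ} (hS : IsUnit S.det) :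
    (S.submatrix Fin.castSucc Fin.castSucc).det = S⁻¹ (Fin.last m) (Fin.last m) * S.det := by
  rw [inv_def, smul_apply, adjugate_fin_succ_eq_det_submatrix, Fin.succAbove_last, Fin.val_last,
    Even.neg_one_pow ⟨m, rfl⟩, Ring.inverse_eq_inv, smul_eq_mul, one_mul, mul_comm,
    ← mul_assoc, mul_inv_cancel₀ hS.ne_zero, one_mul]

end Matrix

noncomputable def gaussDensity {q : ℕ} (S : Matrix (Fin q) (Fin q) ℝ) (u : Fin q → ℝ) : ℝ :=
  (2 * Real.pi) ^ (-(q : ℝ) / 2) * S.det ^ (-(1 : ℝ) / 2) * Real.exp (-(u ⬝ᵥ S⁻¹ *ᵥ u) / 2)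

theorem gaussCDF_eq_setIntegral_gaussDensity {q : ℕ} (S : Matrix (Fin q) (Fin q) ℝ)
    (x : Fin q → ℝ) :
    gaussCDF S x = ∫ u in Set.pi Set.univ fun i => Set.Iic (x i), gaussDensity S u :=
  rfl

theorem Matrix.PosDef.integrable_gaussDensity {m : ℕ} {S : Matrix (Fin (m + 1)) (Fin (m + 1)) ℝ}
    (hS : S.PosDef) : Integrable (gaussDensity S) :=
  hS.inv.integrable_exp_neg_dotProduct_mulVec.const_mul _

theorem Matrix.PosDef.integral_gaussDensity_snoc {m : ℕ}
    {S : Matrix (Fin (m + 1)) (Fin (m + 1)) ℝ} (hS : S.PosDef) (v : Fin m → ℝ) :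
    ∫ t, gaussDensity S (Fin.snoc v t)
      = gaussDensity (S.submatrix Fin.castSucc Fin.castSucc) v := by
  have hunit : IsUnit S.det := hS.det_pos.ne'.isUnit
  have hsymm : S⁻¹.IsSymm := Matrix.isHermitian_iff_isSymm.1 hS.inv.isHermitian
  have hα : 0 < S⁻¹ (Fin.last m) (Fin.last m) := hS.inv.diag_pos
  have hinv : (S.submatrix Fin.castSucc Fin.castSucc)⁻¹ = S⁻¹.lastSchurComplement :=
    Matrix.inv_eq_left_inv <|
      Matrix.lastSchurComplement_mul_submatrix_castSucc (Matrix.nonsing_inv_mul S hunit) hα.ne'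
  simp only [gaussDensity, hsymm.dotProduct_mulVec_snoc, integral_const_mul,
    integral_exp_neg_quadratic hα, hinv, hsymm.dotProduct_lastSchurComplement_mulVec,
    Matrix.det_submatrix_castSucc hunit]
  have h2π : 0 < 2 * Real.pi := by positivity
  rw [Real.mul_rpow hα.le hS.det_pos.le, Real.sqrt_eq_rpow, Real.div_rpow h2π.le hα.le,
    show -((m + 1 : ℕ) : ℝ) / 2 = -(m : ℝ) / 2 + -(1 / 2) by push_cast; ring,
    Real.rpow_add h2π, show -(1 : ℝ) / 2 = -(1 / 2) by ring, Real.rpow_neg h2π.le,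
    Real.rpow_neg hα.le, Real.rpow_neg hS.det_pos.le]
  field_simp

theorem setIntegral_preimage_init {α E : Type*} [MeasureSpace α] [SigmaFinite (volume : Measure α)]
    [NormedAddCommGroup E] [NormedSpace ℝ E] {m : ℕ}
    {f : (Fin (m + 1) → α) → E} (hf : Integrable f) (T : Set (Fin m → α)) :
    ∫ u in Fin.init ⁻¹' T, f u = ∫ v in T, ∫ t, f (Fin.snoc v t) := by
  set e := MeasurableEquiv.piFinSuccAbove (fun _ : Fin (m + 1) => α) (Fin.last m)
  have he : MeasurePreserving e.symm (volume.prod volume) volume :=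
    (volume_preserving_piFinSuccAbove (fun _ => α) (Fin.last m)).symm e
  have hsnoc (p : α × (Fin m → α)) : e.symm p = Fin.snoc p.2 p.1 := Fin.insertNth_last' _ _
  have hpre : e.symm ⁻¹' (Fin.init ⁻¹' T) = Set.univ ×ˢ T := by
    ext p
    simp [hsnoc]
  have hF : Integrable (fun p : α × (Fin m → α) => f (Fin.snoc p.2 p.1)) (volume.prod volume) := by
    simpa [Function.comp_def, hsnoc] using (he.integrable_comp_emb e.symm.measurableEmbedding).2 hf
  rw [← he.setIntegral_preimage_emb e.symm.measurableEmbedding, hpre, ← Measure.prod_restrict,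
    Measure.restrict_univ]
  simp_rw [hsnoc]
  exact integral_prod_symm _ (hF.mono_measure (Measure.prod_mono le_rfl Measure.restrict_le_self))

theorem tendsto_setIntegral_of_eventually_mem_iff {α ι E : Type*} [MeasurableSpace α]
    {μ : Measure α} [NormedAddCommGroup E] [NormedSpace ℝ E] {l : Filter ι}
    [l.IsCountablyGenerated] {f : α → E} (hf : Integrable f μ) {s : ι → Set α} {t : Set α}
    (hs : ∀ i, MeasurableSet (s i)) (ht : MeasurableSet t)
    (hst : ∀ x, ∀ᶠ i in l, x ∈ s i ↔ x ∈ t) :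
    Tendsto (fun i => ∫ x in s i, f x ∂μ) l (𝓝 (∫ x in t, f x ∂μ)) := by
  simp_rw [← integral_indicator (hs _), ← integral_indicator ht]
  refine tendsto_integral_filter_of_dominated_convergence (fun x => ‖f x‖)
    (Eventually.of_forall fun i => hf.aestronglyMeasurable.indicator (hs i))
    (Eventually.of_forall fun i => Eventually.of_forall fun x => norm_indicator_le_norm_self _ _)
    hf.norm (Eventually.of_forall fun x => tendsto_const_nhds.congr' ?_)
  filter_upwards [hst x] with i hi
  classical
  rw [Set.indicator_apply, Set.indicator_apply]
  exact if_congr hi.symm rfl rfl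

theorem Fin.pi_Iic_update_last {m : ℕ} (y : Fin (m + 1) → ℝ) (c : ℝ) :
    Set.pi Set.univ (fun i => Set.Iic (Function.update y (Fin.last m) c i))
      = Fin.init ⁻¹' Set.pi Set.univ (fun i => Set.Iic (y i.castSucc))
        ∩ {u | u (Fin.last m) ≤ c} := by
  ext u
  simp only [Set.mem_inter_iff, Set.mem_preimage, Set.mem_univ_pi, Set.mem_Iic, Set.mem_ofPred_eq,
    Fin.forall_fin_succ', Fin.init, Function.update_self,
    Function.update_of_ne (Fin.castSucc_lt_last _).ne]

namespace Matrix.PosDef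

variable {m : ℕ} {S : Matrix (Fin (m + 1)) (Fin (m + 1)) ℝ}

theorem tendsto_gaussCDF_update_last_atTop (hS : S.PosDef) (y : Fin (m + 1) → ℝ) :
    Tendsto (fun c => gaussCDF S (Function.update y (Fin.last m) c)) atTop
      (𝓝 (gaussCDF (S.submatrix Fin.castSucc Fin.castSucc) fun i => y i.castSucc)) := by
  have hlim : gaussCDF (S.submatrix Fin.castSucc Fin.castSucc) (fun i => y i.castSucc)
      = ∫ u in Fin.init ⁻¹' Set.pi Set.univ (fun i => Set.Iic (y i.castSucc)),
          gaussDensity S u := by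
    simp only [setIntegral_preimage_init hS.integrable_gaussDensity, hS.integral_gaussDensity_snoc,
      gaussCDF_eq_setIntegral_gaussDensity]
  simp_rw [hlim, gaussCDF_eq_setIntegral_gaussDensity]
  refine tendsto_setIntegral_of_eventually_mem_iff hS.integrable_gaussDensity
    (fun c => MeasurableSet.univ_pi fun i => measurableSet_Iic) (by measurability) fun u => ?_
  filter_upwards [eventually_ge_atTop (u (Fin.last m))] with c hc
  simp only [Fin.pi_Iic_update_last, Set.mem_inter_iff, Set.mem_ofPred_eq, hc, and_true]

theorem tendsto_gaussCDF_update_last_atBot (hS : S.PosDef) (y : Fin (m + 1) → ℝ) :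
    Tendsto (fun c => gaussCDF S (Function.update y (Fin.last m) c)) atBot (𝓝 0) := by
  simp_rw [gaussCDF_eq_setIntegral_gaussDensity]
  rw [← setIntegral_empty (f := gaussDensity S) (μ := volume)]
  refine tendsto_setIntegral_of_eventually_mem_iff hS.integrable_gaussDensity
    (fun c => MeasurableSet.univ_pi fun i => measurableSet_Iic) MeasurableSet.empty fun u => ?_
  filter_upwards [eventually_lt_atBot (u (Fin.last m))] with c hc
  simp only [Fin.pi_Iic_update_last, Set.mem_inter_iff, Set.mem_ofPred_eq, not_le.2 hc, and_false,
    Set.mem_empty_iff_false]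

end Matrix.PosDef

theorem Fin.strictMono_snoc {α : Type*} [Preorder α] {q : ℕ} {g : Fin q → α} (hg : StrictMono g)
    {a : α} (ha : ∀ i, g i < a) : StrictMono (Fin.snoc g a : Fin (q + 1) → α) := by
  intro i j hij
  induction j using Fin.lastCases with
  | last =>
    induction i using Fin.lastCases with
    | last => exact absurd hij (lt_irrefl _)
    | cast i => simpa using ha i
  | cast j =>
    induction i using Fin.lastCases with
    | last => exact absurd hij (not_lt.2 (Fin.castSucc_lt_last j).le)
    | cast i => simpa using hg (Fin.castSucc_lt_castSucc_iff.1 hij)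

def Fin.extendLast {n q : ℕ} (e : Fin q → Fin n) : Fin (q + 1) → Fin (n + 1) :=
  Fin.snoc (α := fun _ => Fin (n + 1)) (fun i => (e i).castSucc) (Fin.last n)

@[simp]
theorem Fin.extendLast_castSucc {n q : ℕ} (e : Fin q → Fin n) (i : Fin q) :
    Fin.extendLast e i.castSucc = (e i).castSucc :=
  Fin.snoc_castSucc ..

@[simp]
theorem Fin.extendLast_last {n q : ℕ} (e : Fin q → Fin n) :
    Fin.extendLast e (Fin.last q) = Fin.last n :=
  Fin.snoc_last ..

theorem Fin.strictMono_extendLast {n q : ℕ} {e : Fin q → Fin n} (he : StrictMono e) :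
    StrictMono (Fin.extendLast e) :=
  Fin.strictMono_snoc (Fin.strictMono_castSucc.comp he) fun _ => Fin.castSucc_lt_last _

theorem Finset.orderEmbOfFin_map {α β : Type*} [LinearOrder α] [LinearOrder β] {f : α ↪ β}
    (hf : StrictMono f) (s : Finset α) {k : ℕ} (h : s.card = k) (h' : (s.map f).card = k) :
    ⇑((s.map f).orderEmbOfFin h') = f ∘ s.orderEmbOfFin h :=
  (orderEmbOfFin_unique h' (fun i => mem_map_of_mem f (orderEmbOfFin_mem s h i))
    (hf.comp (s.orderEmbOfFin h).strictMono)).symm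

theorem Finset.orderEmbOfFin_insert_last_map_castSucc {n q : ℕ} (t : Finset (Fin n))
    (h : t.card = q) (h' : (insert (Fin.last n) (t.map Fin.castSuccEmb)).card = q + 1) :
    ⇑((insert (Fin.last n) (t.map Fin.castSuccEmb)).orderEmbOfFin h')
      = Fin.extendLast (t.orderEmbOfFin h) := by
  refine (orderEmbOfFin_unique h' (fun i => ?_)
    (Fin.strictMono_extendLast (t.orderEmbOfFin h).strictMono)).symm
  induction i using Fin.lastCases with
  | last => simp
  | cast i => simp

theorem Finset.sum_powersetCard_succ_insert {α M : Type*} [DecidableEq α] [AddCommMonoid M]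
    {x : α} {s : Finset α} (hx : x ∉ s) (q : ℕ) (F : Finset α → M) :
    ∑ u ∈ powersetCard (q + 1) (insert x s), F u
      = ∑ u ∈ powersetCard (q + 1) s, F u + ∑ u ∈ powersetCard q s, F (insert x u) := by
  have hnotMem {u : Finset α} (hu : u ∈ powersetCard q s) : x ∉ u :=
    fun hxu => hx ((mem_powersetCard.1 hu).1 hxu)
  rw [powersetCard_succ_insert hx, sum_union, sum_image]
  · intro u hu v hv huv
    rw [← erase_insert (hnotMem hu), ← erase_insert (hnotMem hv), huv]
  · refine disjoint_left.2 fun u hu hu' => ?_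
    obtain ⟨v, -, rfl⟩ := mem_image.1 hu'
    exact hx ((mem_powersetCard.1 hu).1 (mem_insert_self x v))

theorem gaussCDF_fin_zero (R : Matrix (Fin 0) (Fin 0) ℝ) (x : Fin 0 → ℝ) : gaussCDF R x = 1 := by
  have hIic : Set.Iic x = Set.univ := Set.eq_univ_of_forall fun u => (Subsingleton.elim u x).le
  simp [gaussCDF, hIic, volume_pi, Measure.real]

noncomputable def subsetCDF {n : ℕ} (p : ℕ) (R : Matrix (Fin n) (Fin n) ℝ) (x : Fin n → ℝ)
    (s : Finset (Fin n)) : ℝ :=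
  if h : s.card = p then
    gaussCDF (R.submatrix (s.orderEmbOfFin h) (s.orderEmbOfFin h)) fun i => x (s.orderEmbOfFin h i)
  else 0

theorem blockFun_eq_sum_subsetCDF (n p : ℕ) (R : Matrix (Fin n) (Fin n) ℝ) (x : Fin n → ℝ) :
    blockFun n p R x = ∑ s ∈ powersetCard p univ, subsetCDF p R x s := by
  rcases p with _ | p
  · simp [blockFun, subsetCDF, gaussCDF_fin_zero]
  · rfl

section Block

variable {n : ℕ} (R : Matrix (Fin (n + 1)) (Fin (n + 1)) ℝ) (x : Fin (n + 1) → ℝ)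

theorem subsetCDF_map_castSucc (p : ℕ) (t : Finset (Fin n)) :
    subsetCDF p R x (t.map Fin.castSuccEmb)
      = subsetCDF p (R.submatrix Fin.castSucc Fin.castSucc) (Fin.init x) t := by
  by_cases h : t.card = p
  · have h' : (t.map Fin.castSuccEmb).card = p := by rw [card_map, h]
    rw [subsetCDF, subsetCDF, dif_pos h', dif_pos h,
      orderEmbOfFin_map Fin.strictMono_castSucc t h h']
    rfl
  · rw [subsetCDF, subsetCDF, dif_neg (by rwa [card_map]), dif_neg h]

theorem subsetCDF_insert_last {q : ℕ} {t : Finset (Fin n)} (h : t.card = q) :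
    subsetCDF (q + 1) R x (insert (Fin.last n) (t.map Fin.castSuccEmb))
      = gaussCDF
          (R.submatrix (Fin.extendLast (t.orderEmbOfFin h)) (Fin.extendLast (t.orderEmbOfFin h)))
        fun i => x (Fin.extendLast (t.orderEmbOfFin h) i) := by
  have h' : (insert (Fin.last n) (t.map Fin.castSuccEmb)).card = q + 1 := by
    rw [card_insert_of_notMem (by simp), card_map, h]
  rw [subsetCDF, dif_pos h', orderEmbOfFin_insert_last_map_castSucc t h h']

theorem blockFun_succ_succ (q : ℕ) :
    blockFun (n + 1) (q + 1) R x
      = blockFun n (q + 1) (R.submatrix Fin.castSucc Fin.castSucc) (Fin.init x)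
        + ∑ t ∈ powersetCard q univ,
            subsetCDF (q + 1) R x (insert (Fin.last n) (t.map Fin.castSuccEmb)) := by
  rw [blockFun_eq_sum_subsetCDF, blockFun_eq_sum_subsetCDF, Fin.univ_castSuccEmb, cons_eq_insert,
    sum_powersetCard_succ_insert (by simp), powersetCard_map, powersetCard_map, sum_map, sum_map]
  simp only [RelEmbedding.coe_toEmbedding, mapEmbedding_apply, subsetCDF_map_castSucc]

end Block

section BlockLimit

variable {n : ℕ} {R : Matrix (Fin (n + 1)) (Fin (n + 1)) ℝ}

theorem Matrix.PosDef.tendsto_subsetCDF_insert_last (hR : R.PosDef) (x : Fin (n + 1) → ℝ)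
    {q : ℕ} {t : Finset (Fin n)} (h : t.card = q) :
    Tendsto (fun c => subsetCDF (q + 1) R (Function.update x (Fin.last n) c)
        (insert (Fin.last n) (t.map Fin.castSuccEmb))) atTop
      (𝓝 (subsetCDF q (R.submatrix Fin.castSucc Fin.castSucc) (Fin.init x) t)) ∧
    Tendsto (fun c => subsetCDF (q + 1) R (Function.update x (Fin.last n) c)
        (insert (Fin.last n) (t.map Fin.castSuccEmb))) atBot (𝓝 0) := by
  rw [subsetCDF, dif_pos h]
  simp only [subsetCDF_insert_last _ _ h]
  set E := Fin.extendLast (t.orderEmbOfFin h)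
  have hE : Function.Injective E :=
    (Fin.strictMono_extendLast (t.orderEmbOfFin h).strictMono).injective
  have hupdate (c : ℝ) : (fun i => Function.update x (Fin.last n) c (E i))
      = Function.update (fun i => x (E i)) (Fin.last q) c := by
    rw [← Fin.extendLast_last (t.orderEmbOfFin h)]
    exact Function.update_comp_eq_of_injective' x hE _ c
  have hcast : E ∘ Fin.castSucc = Fin.castSucc ∘ t.orderEmbOfFin h := by
    ext i; simp [E]
  have hinit : (fun i => Fin.init x (t.orderEmbOfFin h i)) = fun i => x (E i.castSucc) := by
    ext i; simp [E, Fin.init]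
  have hS : (R.submatrix E E).PosDef := hR.submatrix hE
  simp only [hupdate]
  rw [Matrix.submatrix_submatrix, ← hcast, ← Matrix.submatrix_submatrix, hinit]
  exact ⟨hS.tendsto_gaussCDF_update_last_atTop _, hS.tendsto_gaussCDF_update_last_atBot _⟩

theorem Matrix.PosDef.tendsto_blockFun_update_last_atTop (hR : R.PosDef) (x : Fin (n + 1) → ℝ)
    (q : ℕ) :
    Tendsto (fun c => blockFun (n + 1) (q + 1) R (Function.update x (Fin.last n) c)) atTop
      (𝓝 (blockFun n (q + 1) (R.submatrix Fin.castSucc Fin.castSucc) (Fin.init x)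
        + blockFun n q (R.submatrix Fin.castSucc Fin.castSucc) (Fin.init x))) := by
  simp only [blockFun_succ_succ, Fin.init_update_last]
  rw [blockFun_eq_sum_subsetCDF n q]
  exact tendsto_const_nhds.add <| tendsto_finsetSum _ fun t ht =>
    (hR.tendsto_subsetCDF_insert_last x (mem_powersetCard.1 ht).2).1

theorem Matrix.PosDef.tendsto_blockFun_update_last_atBot (hR : R.PosDef) (x : Fin (n + 1) → ℝ)
    (q : ℕ) :
    Tendsto (fun c => blockFun (n + 1) (q + 1) R (Function.update x (Fin.last n) c)) atBot
      (𝓝 (blockFun n (q + 1) (R.submatrix Fin.castSucc Fin.castSucc) (Fin.init x))) := by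
  simp only [blockFun_succ_succ, Fin.init_update_last]
  simpa using tendsto_const_nhds.add <| tendsto_finsetSum (powersetCard q univ) fun t ht =>
    (hR.tendsto_subsetCDF_insert_last x (mem_powersetCard.1 ht).2).2

end BlockLimit

theorem blockFun_eq_zero_of_lt {n p : ℕ} (h : n < p) (R : Matrix (Fin n) (Fin n) ℝ)
    (x : Fin n → ℝ) : blockFun n p R x = 0 := by
  rw [blockFun_eq_sum_subsetCDF, powersetCard_eq_empty.2 (by simpa using h), sum_empty]

noncomputable def clusterSum (n : ℕ) (b : ℕ → ℝ) : ℝ :=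
  ∑ p ∈ range (n + 1), (-1 : ℝ) ^ p * 2 ^ (n - p) * b (n - p)

theorem clusterFun_eq_clusterSum (n : ℕ) (R : Matrix (Fin n) (Fin n) ℝ) (x : Fin n → ℝ) :
    clusterFun n R x = clusterSum n fun q => blockFun n q R x :=
  rfl

theorem clusterSum_add (n : ℕ) (b b' : ℕ → ℝ) :
    clusterSum n (fun q => b q + b' q) = clusterSum n b + clusterSum n b' := by
  simp only [clusterSum, mul_add, sum_add_distrib]

theorem clusterSum_succ (n : ℕ) (b : ℕ → ℝ) :
    clusterSum (n + 1) b = 2 ^ (n + 1) * b (n + 1) - clusterSum n b := by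
  rw [clusterSum, sum_range_succ', clusterSum]
  simp only [Nat.add_sub_add_right, Nat.sub_zero, pow_succ, mul_neg_one, neg_mul, sum_neg_distrib]
  ring

theorem clusterSum_succ_shift (n : ℕ) (b : ℕ → ℝ) :
    clusterSum (n + 1) (fun q => if q = 0 then 0 else b (q - 1)) = 2 * clusterSum n b := by
  rw [clusterSum, sum_range_succ, Nat.sub_self, if_pos rfl, mul_zero, add_zero, clusterSum,
    mul_sum]
  refine sum_congr rfl fun p hp => ?_
  rw [show n + 1 - p = n - p + 1 by have := mem_range.1 hp; omega, if_neg (Nat.succ_ne_zero _),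
    Nat.add_sub_cancel, pow_succ]
  ring

theorem tendsto_clusterSum {α : Type*} {l : Filter α} (n : ℕ) {b : α → ℕ → ℝ} {L : ℕ → ℝ}
    (h : ∀ q, Tendsto (fun c => b c q) l (𝓝 (L q))) :
    Tendsto (fun c => clusterSum n (b c)) l (𝓝 (clusterSum n L)) :=
  tendsto_finsetSum _ fun p _ => (h (n - p)).const_mul _

section ClusterLimit

variable {n : ℕ} {R : Matrix (Fin (n + 1)) (Fin (n + 1)) ℝ}

theorem Matrix.PosDef.tendsto_clusterFun_update_last_atTop (hR : R.PosDef)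
    (x : Fin (n + 1) → ℝ) :
    Tendsto (fun c => clusterFun (n + 1) R (Function.update x (Fin.last n) c)) atTop
      (𝓝 (clusterFun n (R.submatrix Fin.castSucc Fin.castSucc) (Fin.init x))) := by
  set B := fun q => blockFun n q (R.submatrix Fin.castSucc Fin.castSucc) (Fin.init x)
  have hB : B (n + 1) = 0 := blockFun_eq_zero_of_lt (Nat.lt_add_one n) _ _
  have hlim : clusterFun n (R.submatrix Fin.castSucc Fin.castSucc) (Fin.init x)
      = clusterSum (n + 1) fun q => B q + if q = 0 then 0 else B (q - 1) := by
    rw [clusterSum_add, clusterSum_succ, clusterSum_succ_shift, hB, clusterFun_eq_clusterSum]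
    ring
  rw [hlim]
  simp only [clusterFun_eq_clusterSum]
  refine tendsto_clusterSum (n + 1) fun q => ?_
  rcases q with _ | q
  · simp [B, blockFun]
  · simpa [B] using hR.tendsto_blockFun_update_last_atTop x q

theorem Matrix.PosDef.tendsto_clusterFun_update_last_atBot (hR : R.PosDef)
    (x : Fin (n + 1) → ℝ) :
    Tendsto (fun c => clusterFun (n + 1) R (Function.update x (Fin.last n) c)) atBot
      (𝓝 (-clusterFun n (R.submatrix Fin.castSucc Fin.castSucc) (Fin.init x))) := by
  have hlim : -clusterFun n (R.submatrix Fin.castSucc Fin.castSucc) (Fin.init x)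
      = clusterSum (n + 1) fun q =>
          blockFun n q (R.submatrix Fin.castSucc Fin.castSucc) (Fin.init x) := by
    rw [clusterSum_succ, blockFun_eq_zero_of_lt (Nat.lt_add_one n), clusterFun_eq_clusterSum]
    ring
  rw [hlim]
  simp only [clusterFun_eq_clusterSum]
  refine tendsto_clusterSum (n + 1) fun q => ?_
  rcases q with _ | q
  · simp [blockFun]
  · exact hR.tendsto_blockFun_update_last_atBot x q

end ClusterLimit

theorem cluster_function_clustering_general (n : ℕ)
    (R : Matrix (Fin (n + 1)) (Fin (n + 1)) ℝ) (hpd : R.PosDef)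
    (x : Fin (n + 1) → ℝ) :
    Tendsto (fun c => clusterFun (n + 1) R (Function.update x (Fin.last n) c)) atTop
      (nhds (clusterFun n (R.submatrix Fin.castSucc Fin.castSucc) (fun i => x i.castSucc))) ∧
    Tendsto (fun c => clusterFun (n + 1) R (Function.update x (Fin.last n) c)) atBot
      (nhds (-clusterFun n (R.submatrix Fin.castSucc Fin.castSucc) (fun i => x i.castSucc))) :=
  ⟨hpd.tendsto_clusterFun_update_last_atTop x, hpd.tendsto_clusterFun_update_last_atBot x⟩

theorem cluster_function_clustering (n : ℕ)
    (R : Matrix (Fin (n + 1)) (Fin (n + 1)) ℝ) (hsym : R.IsSymm) (hpd : R.PosDef)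
    (hdiag : ∀ i, R i i = 1) (x : Fin (n + 1) → ℝ) :
    Tendsto (fun c => clusterFun (n + 1) R (Function.update x (Fin.last n) c)) atTop
      (nhds (clusterFun n (R.submatrix Fin.castSucc Fin.castSucc) (fun i => x i.castSucc))) ∧
    Tendsto (fun c => clusterFun (n + 1) R (Function.update x (Fin.last n) c)) atBot
      (nhds (-clusterFun n (R.submatrix Fin.castSucc Fin.castSucc) (fun i => x i.castSucc))) :=
  cluster_function_clustering_general n R hpd x
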